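/- arXiv:0801.4932 — 4 statements merged into one kernel-verified Lean document; each statement's English description precedes it below -/
import Mathlib

section
/- The function φ₁ is square integrable on ℝ, for every ω > 0 one has ∫_ℝ φ_ω(x)² dx = ω^{(5-p)/(2(p-1))} · ∫_ℝ φ₁(x)² dx, and (since p > 5) the map ω ↦ ∫_ℝ φ_ω(x)² dx is strictly decreasing on (0,∞); in particular its derivative d(‖φ_ω‖_{L²}²)/dω is nonzero for every ω > 0. -/
/-! The profile is `ω^{1/(p-1)} φ₁(√ω x)`, so substituting `y = √ω x` gives
`‖φ_ω‖₂² = ω^{2/(p-1) - 1/2} ‖φ₁‖₂²`; the exponent `(5-p)/(2(p-1))` is negative for `p > 5`, and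
`‖φ₁‖₂²` is finite and positive because `sech y ≤ 2e^{-|y|}`. -/

noncomputable section

open Real MeasureTheory

/-- `sech y = 1 / cosh y`. -/
def sech (y : ℝ) : ℝ := 1 / Real.cosh y

/-- The ground state profile `φ_ω(x) = (ω(p+1)/2)^{1/(p-1)} (sech(((p-1)/2)√ω x))^{2/(p-1)}`. -/
def phi (p ω x : ℝ) : ℝ :=
  (ω * (p + 1) / 2) ^ (1 / (p - 1)) * sech ((p - 1) / 2 * Real.sqrt ω * x) ^ (2 / (p - 1))

lemma sech_pos (y : ℝ) : 0 < sech y := by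
  unfold sech; positivity

lemma sech_neg (y : ℝ) : sech (-y) = sech y := by
  simp [sech]

lemma continuous_sech : Continuous sech :=
  continuous_const.div continuous_cosh fun y => (cosh_pos y).ne'

lemma sech_le_two_mul_exp_neg (y : ℝ) : sech y ≤ 2 * exp (-y) := by
  rw [sech, div_le_iff₀ (cosh_pos y), cosh_eq, exp_neg]
  field_simp
  nlinarith [exp_pos y]

lemma sech_rpow_le {s : ℝ} (hs : 0 ≤ s) (y : ℝ) : sech y ^ s ≤ 2 ^ s * exp (-s * y) :=
  calc sech y ^ s ≤ (2 * exp (-y)) ^ s :=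
        rpow_le_rpow (sech_pos y).le (sech_le_two_mul_exp_neg y) hs
    _ = 2 ^ s * exp (-s * y) := by
      rw [mul_rpow zero_le_two (exp_pos _).le, ← exp_mul]; ring_nf

lemma integrable_sech_rpow {s : ℝ} (hs : 0 < s) : Integrable fun y => sech y ^ s := by
  refine (continuous_sech.rpow_const fun _ => Or.inr hs.le).locallyIntegrable
    |>.integrable_of_isBigO_atTop_of_norm_isNegInvariant (g := fun y => exp (-s * y))
      (.of_forall fun y => by simp [sech_neg]) ?_
      ⟨Set.Ioi 0, Filter.Ioi_mem_atTop 0, exp_neg_integrableOn_Ioi 0 hs⟩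
  refine Asymptotics.IsBigO.of_bound (2 ^ s) (.of_forall fun y => ?_)
  rw [norm_of_nonneg (rpow_nonneg (sech_pos y).le s), norm_of_nonneg (exp_pos _).le]
  exact sech_rpow_le hs.le y

lemma phi_eq_rpow_mul_phi_one {p ω : ℝ} (hp : -1 ≤ p) (hω : 0 ≤ ω) (x : ℝ) :
    phi p ω x = ω ^ (1 / (p - 1)) * phi p 1 (√ω * x) := by
  rw [phi, phi, mul_div_assoc, mul_rpow hω (by linarith), sqrt_one]
  ring_nf

lemma phi_sq_eq {p ω : ℝ} (hp : -1 ≤ p) (hω : 0 ≤ ω) (x : ℝ) :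
    phi p ω x ^ 2 = ω ^ (2 / (p - 1)) * phi p 1 (√ω * x) ^ 2 := by
  rw [phi_eq_rpow_mul_phi_one hp hω, mul_pow, ← rpow_natCast (ω ^ _), ← rpow_mul hω]
  ring_nf

lemma phi_one_sq {p : ℝ} (hp : -1 ≤ p) (x : ℝ) :
    phi p 1 x ^ 2 = ((p + 1) / 2) ^ (2 / (p - 1)) * sech ((p - 1) / 2 * x) ^ (4 / (p - 1)) := by
  rw [phi, mul_pow, ← rpow_natCast, ← rpow_natCast (sech _ ^ _), ← rpow_mul (by linarith),
    ← rpow_mul (sech_pos _).le, sqrt_one]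
  ring_nf

lemma phi_pos {p ω : ℝ} (hp : -1 < p) (hω : 0 < ω) (x : ℝ) : 0 < phi p ω x := by
  have hbase : 0 < ω * (p + 1) / 2 := div_pos (mul_pos hω (by linarith)) two_pos
  exact mul_pos (rpow_pos_of_pos hbase _) (rpow_pos_of_pos (sech_pos _) _)

lemma integrable_phi_one_sq {p : ℝ} (hp : 1 < p) : Integrable fun x => phi p 1 x ^ 2 := by
  simp_rw [phi_one_sq (by linarith : -1 ≤ p)]
  exact ((integrable_sech_rpow (by have := sub_pos.2 hp; positivity)).comp_mul_left'
    (by linarith : (p - 1) / 2 ≠ 0)).const_mul _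

lemma integral_phi_one_sq_pos {p : ℝ} (hp : 1 < p) : 0 < ∫ x, phi p 1 x ^ 2 := by
  rw [integral_pos_iff_support_of_nonneg (fun x => sq_nonneg _) (integrable_phi_one_sq hp),
    Function.support_eq_univ fun x => (pow_pos (phi_pos (by linarith) one_pos x) 2).ne']
  simp

lemma integral_phi_sq {p ω : ℝ} (hp : -1 ≤ p) (hp₁ : p ≠ 1) (hω : 0 < ω) :
    ∫ x, phi p ω x ^ 2 = ω ^ ((5 - p) / (2 * (p - 1))) * ∫ x, phi p 1 x ^ 2 := by
  have hexp : (5 - p) / (2 * (p - 1)) = 2 / (p - 1) + -(1 / 2) := by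
    field_simp [sub_ne_zero.2 hp₁]; ring
  simp_rw [phi_sq_eq hp hω.le, integral_const_mul, Measure.integral_comp_mul_left
    (fun y => phi p 1 y ^ 2), smul_eq_mul, abs_of_pos (inv_pos.2 (sqrt_pos.2 hω)), ← mul_assoc,
    hexp, rpow_add hω, rpow_neg hω.le, sqrt_eq_rpow]

/-- `φ₁` is square integrable, `‖φ_ω‖₂² = ω^{(5-p)/(2(p-1))} ‖φ₁‖₂²`, the map
`ω ↦ ‖φ_ω‖₂²` is strictly decreasing on `(0,∞)` and its derivative never vanishes there. -/
theorem ground_state_L2_norm (p : ℝ) (hp : 5 < p) :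
    Integrable (fun x => phi p 1 x ^ 2) ∧
    (∀ ω > (0 : ℝ), ∫ x, phi p ω x ^ 2 =
      ω ^ ((5 - p) / (2 * (p - 1))) * ∫ x, phi p 1 x ^ 2) ∧
    StrictAntiOn (fun ω => ∫ x, phi p ω x ^ 2) (Set.Ioi 0) ∧
    ∀ ω > (0 : ℝ), deriv (fun ω' => ∫ x, phi p ω' x ^ 2) ω ≠ 0 := by
  set q := (5 - p) / (2 * (p - 1))
  have hq : q < 0 := div_neg_of_neg_of_pos (by linarith) (by linarith)
  have hI := integral_phi_one_sq_pos (by linarith : 1 < p)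
  have hscale : Set.EqOn (fun ω => ∫ x, phi p ω x ^ 2) (fun ω => ω ^ q * ∫ x, phi p 1 x ^ 2)
      (Set.Ioi 0) := fun ω hω => integral_phi_sq (by linarith) (by linarith) hω
  refine ⟨integrable_phi_one_sq (by linarith), fun ω hω => hscale hω, ?_, fun ω hω => ?_⟩
  · have hanti : StrictAntiOn (fun ω : ℝ => ω ^ q * ∫ x, phi p 1 x ^ 2) (Set.Ioi 0) :=
      fun a ha b hb hab => mul_lt_mul_of_pos_right
        (strictAntiOn_rpow_Ioi_of_exponent_neg hq ha hb hab) hI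
    exact hanti.congr hscale.symm
  · rw [(hscale.eventuallyEq_of_mem (Ioi_mem_nhds hω)).deriv_eq,
      ((hasDerivAt_rpow_const (Or.inl (ne_of_gt hω))).mul_const _).deriv]
    exact mul_ne_zero (mul_ne_zero hq.ne (rpow_pos_of_pos hω _).ne') hI.ne'
end
end

section
/- Let X be a complex Banach space and let P, Q : X → X be continuous linear projections (P∘P = P, Q∘Q = Q) with finite-dimensional ranges and with operator norm ‖P - Q‖ < 1. Then: (i) the ranges of P and Q have the same (finite) dimension; (ii) the restriction of Q to the range of P is a linear isomorphism onto the range of Q; (iii) for every f ∈ X there exists exactly one g in the range of P with Q(f + g) = 0; (iv) if moreover P f = 0, this g satisfies (1 - ‖P - Q‖)·‖g‖ ≤ ‖(P - Q)f‖; and (v) if J : X → X is a continuous real-linear involution commuting with both P and Q and J f = f, then J g = g. -/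
noncomputable section

lemma aux_zero {X : Type*} [NormedAddCommGroup X] [NormedSpace ℂ X]
    (A B : X →L[ℂ] X) (h : ‖A - B‖ < 1) (v : X) (hv : A v = v) (hBv : B v = 0) : v = 0 := by
  by_contra hne
  have h1 : v = (A - B) v := by simp [hv, hBv]
  have h2 : ‖(A - B) v‖ ≤ ‖A - B‖ * ‖v‖ := (A - B).le_opNorm v
  rw [← h1] at h2
  have hvpos : 0 < ‖v‖ := norm_pos_iff.mpr hne
  nlinarith

set_option maxHeartbeats 1000000 in
/-- Comparison of two nearby finite-rank projections on a complex Banach space: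
equality of ranks, the second projection restricts to an isomorphism between the ranges,
unique solvability of `Q(f+g) = 0` with `g` in the range of `P`, a quantitative bound
when `P f = 0`, and invariance under a commuting real-linear involution. -/
theorem nearby_projections
    (X : Type*) [NormedAddCommGroup X] [NormedSpace ℂ X] [CompleteSpace X]
    (P Q : X →L[ℂ] X) (hP : ∀ x, P (P x) = P x) (hQ : ∀ x, Q (Q x) = Q x)
    (hfP : FiniteDimensional ℂ (LinearMap.range (P : X →ₗ[ℂ] X)))
    (hfQ : FiniteDimensional ℂ (LinearMap.range (Q : X →ₗ[ℂ] X)))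
    (hPQ : ‖P - Q‖ < 1) :
    (Module.finrank ℂ (LinearMap.range (P : X →ₗ[ℂ] X)) =
      Module.finrank ℂ (LinearMap.range (Q : X →ₗ[ℂ] X))) ∧
    (∃ e : LinearMap.range (P : X →ₗ[ℂ] X) ≃ₗ[ℂ] LinearMap.range (Q : X →ₗ[ℂ] X),
      ∀ v : LinearMap.range (P : X →ₗ[ℂ] X), (e v : X) = Q (v : X)) ∧
    (∀ f : X, ∃! g : X, g ∈ LinearMap.range (P : X →ₗ[ℂ] X) ∧ Q (f + g) = 0) ∧
    (∀ f g : X, P f = 0 → g ∈ LinearMap.range (P : X →ₗ[ℂ] X) → Q (f + g) = 0 →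
      (1 - ‖P - Q‖) * ‖g‖ ≤ ‖(P - Q) f‖) ∧
    (∀ J : X →L[ℝ] X, (∀ x, J (J x) = x) → (∀ x, J (P x) = P (J x)) →
      (∀ x, J (Q x) = Q (J x)) → ∀ f g : X,
      g ∈ LinearMap.range (P : X →ₗ[ℂ] X) → Q (f + g) = 0 → J f = f → J g = g) := by
  have hQP : ‖Q - P‖ < 1 := by rwa [norm_sub_rev]
  have hmemP : ∀ v : X, v ∈ LinearMap.range (P : X →ₗ[ℂ] X) → P v = v := by
    rintro v ⟨w, rfl⟩; exact hP w
  have hmemQ : ∀ v : X, v ∈ LinearMap.range (Q : X →ₗ[ℂ] X) → Q v = v := by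
    rintro v ⟨w, rfl⟩; exact hQ w
  -- key cancellation lemma in range P
  have key : ∀ v : X, v ∈ LinearMap.range (P : X →ₗ[ℂ] X) → Q v = 0 → v = 0 :=
    fun v hv hQv => aux_zero P Q hPQ v (hmemP v hv) hQv
  have keyQ : ∀ v : X, v ∈ LinearMap.range (Q : X →ₗ[ℂ] X) → P v = 0 → v = 0 :=
    fun v hv hPv => aux_zero Q P hQP v (hmemQ v hv) hPv
  set toQ : LinearMap.range (P : X →ₗ[ℂ] X) →ₗ[ℂ] LinearMap.range (Q : X →ₗ[ℂ] X) :=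
    ((Q : X →ₗ[ℂ] X).comp (LinearMap.range (P : X →ₗ[ℂ] X)).subtype).codRestrict _
      (fun v => LinearMap.mem_range_self _ _) with htoQ
  have htoQapp : ∀ v : LinearMap.range (P : X →ₗ[ℂ] X), (toQ v : X) = Q (v : X) := by
    intro v; rfl
  set toP : LinearMap.range (Q : X →ₗ[ℂ] X) →ₗ[ℂ] LinearMap.range (P : X →ₗ[ℂ] X) :=
    ((P : X →ₗ[ℂ] X).comp (LinearMap.range (Q : X →ₗ[ℂ] X)).subtype).codRestrict _
      (fun v => LinearMap.mem_range_self _ _) with htoP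
  have htoPapp : ∀ v : LinearMap.range (Q : X →ₗ[ℂ] X), (toP v : X) = P (v : X) := by
    intro v; rfl
  have hinjQ : Function.Injective toQ := by
    rw [← LinearMap.ker_eq_bot, LinearMap.ker_eq_bot']
    intro v hv
    refine Subtype.ext (key _ v.2 ?_)
    have := congrArg Subtype.val hv
    simpa [htoQapp] using this
  have hinjP : Function.Injective toP := by
    rw [← LinearMap.ker_eq_bot, LinearMap.ker_eq_bot']
    intro v hv
    refine Subtype.ext (keyQ _ v.2 ?_)
    have := congrArg Subtype.val hv
    simpa [htoPapp] using this
  have hrank : Module.finrank ℂ (LinearMap.range (P : X →ₗ[ℂ] X)) =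
      Module.finrank ℂ (LinearMap.range (Q : X →ₗ[ℂ] X)) :=
    le_antisymm (LinearMap.finrank_le_finrank_of_injective hinjQ)
      (LinearMap.finrank_le_finrank_of_injective hinjP)
  have hsurjQ : Function.Surjective toQ :=
    (LinearMap.injective_iff_surjective_of_finrank_eq_finrank hrank).mp hinjQ
  set e := LinearEquiv.ofBijective toQ ⟨hinjQ, hsurjQ⟩ with he
  have heapp : ∀ v : LinearMap.range (P : X →ₗ[ℂ] X), (e v : X) = Q (v : X) := fun v => rfl
  have part3 : ∀ f : X, ∃! g : X, g ∈ LinearMap.range (P : X →ₗ[ℂ] X) ∧ Q (f + g) = 0 := by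
    intro f
    have hmem : -Q f ∈ LinearMap.range (Q : X →ₗ[ℂ] X) := ⟨-f, by simp⟩
    obtain ⟨v, hv⟩ := hsurjQ ⟨-Q f, hmem⟩
    have hQv : Q (v : X) = -Q f := by
      have := congrArg Subtype.val hv
      simpa [htoQapp] using this
    refine ⟨(v : X), ⟨v.2, by rw [map_add, hQv, add_neg_cancel]⟩, ?_⟩
    rintro g ⟨hgmem, hg0⟩
    have hQg : Q g = -Q f := by
      rw [map_add] at hg0; exact eq_neg_of_add_eq_zero_right hg0
    have hdiff : g - (v : X) = 0 := by
      apply key _ (Submodule.sub_mem _ hgmem v.2)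
      rw [map_sub, hQg, hQv, sub_self]
    exact sub_eq_zero.mp hdiff
  refine ⟨hrank, ⟨e, heapp⟩, part3, ?_, ?_⟩
  · -- part (iv)
    intro f g hPf hgmem hfg
    have hPg : P g = g := hmemP g hgmem
    have hQg : Q g = -Q f := by
      rw [map_add] at hfg; exact eq_neg_of_add_eq_zero_right hfg
    have h1 : (P - Q) (f + g) = g := by
      rw [ContinuousLinearMap.sub_apply, map_add, map_add, hPf, hPg, hQg, zero_add,
        add_neg_cancel, sub_zero]
    have hgeq : g = (P - Q) f + (P - Q) g := by rw [← map_add]; exact h1.symm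
    have hn : ‖g‖ ≤ ‖(P - Q) f‖ + ‖(P - Q) g‖ := by
      conv_lhs => rw [hgeq]
      exact norm_add_le _ _
    have hop := (P - Q).le_opNorm g
    nlinarith
  · -- part (v)
    intro J hJJ hJP hJQ f g hgmem hfg hJf
    have hPg : P g = g := hmemP g hgmem
    have hJgP : J g = P (J g) := by
      conv_lhs => rw [← hPg]
      rw [hJP]
    have hJg_mem : J g ∈ LinearMap.range (P : X →ₗ[ℂ] X) := ⟨J g, by rw [ContinuousLinearMap.coe_coe]; exact hJgP.symm⟩
    have hQ0 : Q (f + J g) = 0 := by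
      have h3 : f + J g = J (f + g) := by rw [map_add, hJf]
      rw [h3, ← hJQ, hfg, map_zero]
    obtain ⟨g₀, hg₀, huniq⟩ := part3 f
    have h1 : J g = g₀ := huniq _ ⟨hJg_mem, hQ0⟩
    have h2 : g = g₀ := huniq _ ⟨hgmem, hfg⟩
    rw [h1, h2]
end
end

section
/- Let M > 0 and let A be a set of continuous functions f : [0,∞) → ℝ such that every f ∈ A satisfies |f(t)| ≤ M for all t ≥ 0 and |f(t) - f(s)| ≤ M·|t - s| for all t, s ≥ 0, and such that for every ε > 0 there exists T ≥ 0 with |f(t) - f(s)| ≤ ε for all f ∈ A and all t, s ≥ T. Then A is totally bounded with respect to the supremum metric d(f,g) = sup_{t ≥ 0} |f(t) - g(t)|. -/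
noncomputable section

open BoundedContinuousFunction

/-- A family of bounded continuous functions on `[0,∞)` which is uniformly bounded,
uniformly Lipschitz, and uniformly eventually constant at infinity is totally bounded
for the supremum metric. -/
theorem totally_bounded_half_line
    (M : ℝ) (hM : 0 < M)
    (A : Set (BoundedContinuousFunction (Set.Ici (0 : ℝ)) ℝ))
    (hbdd : ∀ f ∈ A, ∀ t : Set.Ici (0 : ℝ), |f t| ≤ M)
    (hlip : ∀ f ∈ A, ∀ t s : Set.Ici (0 : ℝ), |f t - f s| ≤ M * |(t : ℝ) - (s : ℝ)|)
    (htail : ∀ ε > (0 : ℝ), ∃ T : ℝ, 0 ≤ T ∧ ∀ f ∈ A, ∀ t s : Set.Ici (0 : ℝ),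
      T ≤ (t : ℝ) → T ≤ (s : ℝ) → |f t - f s| ≤ ε) :
    TotallyBounded A := by
  rw [Metric.totallyBounded_iff]
  intro ε hε
  obtain ⟨T₀, hT₀, htl⟩ := htail (ε / 5) (by positivity)
  set T : ℝ := max T₀ 1 with hTdef
  have hT1 : (1 : ℝ) ≤ T := le_max_right _ _
  have hTpos : (0 : ℝ) < T := lt_of_lt_of_le one_pos hT1
  have hT₀T : T₀ ≤ T := le_max_left _ _
  set δ : ℝ := ε / (5 * M) with hδdef
  have hδpos : 0 < δ := by positivity
  obtain ⟨n, hn⟩ : ∃ n : ℕ, T / δ ≤ n := exists_nat_ge _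
  have hnpos : 0 < (n : ℝ) := lt_of_lt_of_le (by positivity) hn
  set h : ℝ := T / n with hhdef
  have hhpos : 0 < h := by positivity
  have hhδ : h ≤ δ := by
    rw [hhdef, div_le_iff₀ hnpos]
    calc T = (T / δ) * δ := by field_simp
    _ ≤ n * δ := by nlinarith
    _ = δ * n := by ring
  have hMh : M * h ≤ ε / 5 := by
    calc M * h ≤ M * δ := by nlinarith
    _ = ε / 5 := by rw [hδdef]; field_simp
  -- grid points
  have hp0 : ∀ i : Fin (n + 1), (0 : ℝ) ≤ (i : ℝ) * h := fun i => by positivity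
  set p : Fin (n + 1) → Set.Ici (0 : ℝ) := fun i => ⟨(i : ℝ) * h, hp0 i⟩ with hpdef
  have hnlt : n < n + 1 := Nat.lt_succ_self n
  have hpn : ((p ⟨n, hnlt⟩ : Set.Ici (0 : ℝ)) : ℝ) = T := by
    show (n : ℝ) * h = T
    rw [hhdef]; field_simp
  -- the evaluation map
  set Φ : BoundedContinuousFunction (Set.Ici (0 : ℝ)) ℝ → (Fin (n + 1) → ℝ) :=
    fun f i => f (p i) with hΦdef
  have hΦtb : TotallyBounded (Φ '' A) := by
    apply TotallyBounded.subset _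
      (isCompact_univ_pi (fun _ : Fin (n + 1) => isCompact_Icc (a := -M) (b := M))).totallyBounded
    rintro _ ⟨f, hf, rfl⟩
    intro i _
    exact abs_le.mp (hbdd f hf (p i))
  obtain ⟨C, hCsub, hCfin, hCcov⟩ := Metric.finite_approx_of_totallyBounded hΦtb (ε / 5)
    (by positivity)
  have hchoice : ∀ c : Fin (n + 1) → ℝ, ∃ f, c ∈ C → f ∈ A ∧ Φ f = c := by
    intro c
    by_cases hc : c ∈ C
    · obtain ⟨f, hf, hfc⟩ := hCsub hc
      exact ⟨f, fun _ => ⟨hf, hfc⟩⟩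
    · exact ⟨0, fun h => absurd h hc⟩
  choose g hg using hchoice
  refine ⟨g '' C, hCfin.image g, ?_⟩
  intro f hf
  obtain ⟨c, hcC, hfc⟩ := Set.mem_iUnion₂.mp (hCcov ⟨f, hf, rfl⟩)
  obtain ⟨hgA, hgΦ⟩ := hg c hcC
  refine Set.mem_iUnion₂.mpr ⟨g c, ⟨c, hcC, rfl⟩, ?_⟩
  rw [Metric.mem_ball]
  have hgrid : ∀ i : Fin (n + 1), |f (p i) - (g c) (p i)| ≤ ε / 5 := by
    intro i
    have h1 : dist (Φ f i) (c i) ≤ dist (Φ f) c := dist_le_pi_dist _ _ i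
    have h2 : dist (Φ f) c < ε / 5 := Metric.mem_ball.mp hfc
    have h3 : (g c) (p i) = c i := congrFun hgΦ i
    calc |f (p i) - (g c) (p i)| = dist (Φ f i) (c i) := by
          rw [Real.dist_eq, ← h3]
    _ ≤ dist (Φ f) c := h1
    _ ≤ ε / 5 := h2.le
  have key : dist f (g c) ≤ 3 * (ε / 5) := by
    rw [BoundedContinuousFunction.dist_le (by positivity)]
    intro x
    rw [Real.dist_eq]
    rcases le_or_gt (x : ℝ) T with hx | hx
    · -- interior point: use nearest grid point
      have hx0 : (0 : ℝ) ≤ (x : ℝ) := x.2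
      set i : ℕ := ⌊(x : ℝ) / h⌋₊ with hidef
      have hile : i ≤ n := by
        have hxn : (x : ℝ) / h ≤ (n : ℝ) := by
          rw [div_le_iff₀ hhpos]
          calc (x : ℝ) ≤ T := hx
          _ = n * h := by rw [hhdef]; field_simp
        simpa using Nat.floor_le_of_le hxn
      have hiFin : i < n + 1 := Nat.lt_succ_of_le hile
      set q : Set.Ici (0 : ℝ) := p ⟨i, hiFin⟩ with hqdef
      have hq : ((q : ℝ)) = (i : ℝ) * h := rfl
      have hdist : |(x : ℝ) - (q : ℝ)| ≤ h := by
        rw [hq, abs_le]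
        constructor
        · have h1 : (i : ℝ) ≤ (x : ℝ) / h := Nat.floor_le (by positivity)
          have h1' : (i : ℝ) * h ≤ (x : ℝ) := (le_div_iff₀ hhpos).mp h1
          linarith
        · have h2 : (x : ℝ) / h < (i : ℝ) + 1 := Nat.lt_floor_add_one _
          have h2' : (x : ℝ) < ((i : ℝ) + 1) * h := (div_lt_iff₀ hhpos).mp h2
          nlinarith
      have hq5 : |f q - (g c) q| ≤ ε / 5 := hgrid ⟨i, hiFin⟩
      have t1 := abs_sub_le (f x) (f q) ((g c) x)
      have t2 := abs_sub_le (f q) ((g c) q) ((g c) x)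
      have l1 := hlip f hf x q
      have l2 := hlip (g c) hgA q x
      have hcomm : |((q : ℝ)) - (x : ℝ)| = |(x : ℝ) - (q : ℝ)| := abs_sub_comm _ _
      have hmul : M * |(x : ℝ) - (q : ℝ)| ≤ M * h := mul_le_mul_of_nonneg_left hdist hM.le
      have hmul2 : M * |((q : ℝ)) - (x : ℝ)| ≤ M * h := by rw [hcomm]; exact hmul
      linarith
    · -- tail point: use the last grid point T
      set q : Set.Ici (0 : ℝ) := p ⟨n, hnlt⟩ with hqdef
      have hq : ((q : ℝ)) = T := hpn
      have htf : |f x - f q| ≤ ε / 5 := by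
        apply htl f hf x q (le_trans hT₀T hx.le) (by rw [hq]; exact hT₀T)
      have htg : |(g c) q - (g c) x| ≤ ε / 5 := by
        apply htl (g c) hgA q x (by rw [hq]; exact hT₀T) (le_trans hT₀T hx.le)
      have hq5 : |f q - (g c) q| ≤ ε / 5 := hgrid ⟨n, hnlt⟩
      have t1 := abs_sub_le (f x) (f q) ((g c) x)
      have t2 := abs_sub_le (f q) ((g c) q) ((g c) x)
      linarith
  calc dist f (g c) ≤ 3 * (ε / 5) := key
  _ < ε := by linarith
end
end

section
/- Fix a real exponent p > 5. There exists a constant C_p > 0 such that for every real φ > 0 and every w ∈ ℂ, | |φ + w|^{p-1}·(φ + w) - φ^p - ((p+1)/2)·φ^{p-1}·w - ((p-1)/2)·φ^{p-1}·conj(w) | ≤ C_p·(φ^{p-2}·|w|² + |w|^p). -/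
/-!
The remainder `R(φ, w) = powRemainder p φ w` is homogeneous, `R(φ, w) = φ^p R(1, w/φ)`,
so it suffices to bound `R(1, u)` by `C (|u|² + |u|^p)`. For `|u| ≥ 1/2` each of its four
terms is `O(|u|^p)`. For `|u| ≤ 1/2`, put `α = (p-1)/2` and `s = |1+u|² - 1 = 2 Re u + |u|²`,
so that `|1+u|^{p-1} = (1+s)^α`; then
`R(1, u) = α|u|² + α s u + ((1+s)^α - 1 - α s)(1+u)`,
and the last factor is a second-order real Taylor remainder, `O(s²) = O(|u|²)`.
-/

open Set

theorem norm_sub_sub_deriv_le_of_norm_deriv2_le {E : Type*} [NormedAddCommGroup E]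
    [NormedSpace ℝ E] {g g' g'' : ℝ → E} {M : ℝ}
    (hg : ∀ t ∈ Icc (0 : ℝ) 1, HasDerivAt g (g' t) t)
    (hg' : ∀ t ∈ Icc (0 : ℝ) 1, HasDerivAt g' (g'' t) t)
    (hM : ∀ t ∈ Icc (0 : ℝ) 1, ‖g'' t‖ ≤ M) :
    ‖g 1 - g 0 - g' 0‖ ≤ M := by
  have h0 : (0 : ℝ) ∈ Icc (0 : ℝ) 1 := left_mem_Icc.2 zero_le_one
  have h1 : (1 : ℝ) ∈ Icc (0 : ℝ) 1 := right_mem_Icc.2 zero_le_one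
  have hM0 : 0 ≤ M := (norm_nonneg _).trans (hM 0 h0)
  have hg'_sub : ∀ t ∈ Icc (0 : ℝ) 1, ‖g' t - g' 0‖ ≤ M := fun t ht => by
    have := (convex_Icc (0 : ℝ) 1).norm_image_sub_le_of_norm_hasDerivWithin_le
      (fun x hx => (hg' x hx).hasDerivWithinAt) hM h0 ht
    rw [sub_zero, Real.norm_of_nonneg ht.1] at this
    nlinarith [ht.2]
  have hlin : ∀ t ∈ Icc (0 : ℝ) 1, HasDerivWithinAt (fun t => g t - t • g' 0)
      (g' t - g' 0) (Icc 0 1) t := fun t ht =>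
    ((hg t ht).sub ((hasDerivAt_id t).smul_const (g' 0))).hasDerivWithinAt.congr_deriv
      (by simp)
  simpa [sub_right_comm] using
    (convex_Icc (0 : ℝ) 1).norm_image_sub_le_of_norm_hasDerivWithin_le hlin hg'_sub h0 h1

theorem abs_one_add_rpow_sub_le {α s : ℝ} (hα : 2 ≤ α) (hs₁ : -1 ≤ s) (hs₂ : s ≤ 2) :
    |(1 + s) ^ α - 1 - α * s| ≤ α * (α - 1) * 3 ^ (α - 2) * s ^ 2 := by
  have hlin : ∀ t : ℝ, HasDerivAt (fun t => 1 + t * s) s t := fun t => by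
    simpa using ((hasDerivAt_id t).mul_const s).const_add 1
  have hbound : ∀ t ∈ Icc (0 : ℝ) 1,
      ‖s * α * (s * (α - 1) * (1 + t * s) ^ (α - 1 - 1))‖ ≤ α * (α - 1) * 3 ^ (α - 2) * s ^ 2 := by
    rintro t ⟨ht₀, ht₁⟩
    have hpow : (1 + t * s) ^ (α - 1 - 1) ≤ 3 ^ (α - 2) := by
      rw [sub_sub, one_add_one_eq_two]
      exact Real.rpow_le_rpow (by nlinarith) (by nlinarith) (by linarith)
    have hcoeff : 0 ≤ α * (α - 1) * s ^ 2 := by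
      have : 0 ≤ α * (α - 1) := by nlinarith
      positivity
    calc ‖s * α * (s * (α - 1) * (1 + t * s) ^ (α - 1 - 1))‖
        = α * (α - 1) * s ^ 2 * (1 + t * s) ^ (α - 1 - 1) := by
          rw [Real.norm_eq_abs, ← abs_of_nonneg (mul_nonneg hcoeff (Real.rpow_nonneg
            (by nlinarith) _))]
          congr 1
          ring
      _ ≤ _ := mul_le_mul_of_nonneg_left hpow hcoeff |>.trans_eq (by ring)
  have := norm_sub_sub_deriv_le_of_norm_deriv2_le
    (g := fun t => (1 + t * s) ^ α) (g' := fun t => s * α * (1 + t * s) ^ (α - 1))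
    (fun t _ => (hlin t).rpow_const (Or.inr (by linarith)))
    (fun t _ => ((hlin t).rpow_const (Or.inr (by linarith))).const_mul (s * α)) hbound
  simpa [mul_comm] using this

noncomputable def powRemainder (p φ : ℝ) (w : ℂ) : ℂ :=
  ((‖(φ : ℂ) + w‖ ^ (p - 1) : ℝ) : ℂ) * ((φ : ℂ) + w)
    - ((φ ^ p : ℝ) : ℂ)
    - (((p + 1) / 2 : ℝ) : ℂ) * ((φ ^ (p - 1) : ℝ) : ℂ) * w
    - (((p - 1) / 2 : ℝ) : ℂ) * ((φ ^ (p - 1) : ℝ) : ℂ) * starRingEnd ℂ w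

theorem powRemainder_eq_rpow_mul {φ : ℝ} (hφ : 0 < φ) (p : ℝ) (w : ℂ) :
    powRemainder p φ w = ((φ ^ p : ℝ) : ℂ) * powRemainder p 1 (w / φ) := by
  have hφ₀ : (φ : ℂ) ≠ 0 := Complex.ofReal_ne_zero.2 hφ.ne'
  obtain ⟨u, rfl⟩ : ∃ u, w = φ * u := ⟨w / φ, (mul_div_cancel₀ _ hφ₀).symm⟩
  have hnorm : ‖(φ : ℂ) + φ * u‖ = φ * ‖1 + u‖ := by
    rw [← mul_one_add, norm_mul, Complex.norm_real, Real.norm_of_nonneg hφ.le]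
  have hφp : φ ^ p = φ ^ (p - 1) * φ := by
    rw [Real.rpow_sub_one hφ.ne', div_mul_cancel₀ _ hφ.ne']
  simp only [powRemainder, mul_div_cancel_left₀ _ hφ₀, hnorm,
    Real.mul_rpow hφ.le (norm_nonneg _), Real.one_rpow, Complex.ofReal_one, hφp, map_mul,
    Complex.conj_ofReal]
  push_cast
  ring

theorem Complex.sq_norm_one_add (u : ℂ) : ‖1 + u‖ ^ 2 = 1 + 2 * u.re + ‖u‖ ^ 2 := by
  rw [Complex.sq_norm, Complex.sq_norm, Complex.normSq_add, Complex.normSq_one, one_mul,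
    Complex.conj_re]
  ring

theorem powRemainder_one_eq (p : ℝ) (u : ℂ) :
    powRemainder p 1 u =
      (((p - 1) / 2 * ‖u‖ ^ 2 : ℝ) : ℂ) + (((p - 1) / 2 * (‖1 + u‖ ^ 2 - 1) : ℝ) : ℂ) * u
        + (((‖1 + u‖ ^ 2) ^ ((p - 1) / 2) - 1 - (p - 1) / 2 * (‖1 + u‖ ^ 2 - 1) : ℝ) : ℂ)
          * (1 + u) := by
  have hpow : ‖1 + u‖ ^ (p - 1) = (‖1 + u‖ ^ 2) ^ ((p - 1) / 2) := by
    rw [← Real.rpow_natCast, ← Real.rpow_mul (norm_nonneg _)]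
    ring_nf
  simp only [powRemainder, Complex.ofReal_one, Real.one_rpow, hpow, Complex.sq_norm_one_add]
  push_cast
  rw [Complex.re_eq_add_conj]
  ring

theorem norm_powRemainder_one_le_of_half_le_norm {p : ℝ} (hp : 1 ≤ p) {u : ℂ}
    (hu : 1 / 2 ≤ ‖u‖) : ‖powRemainder p 1 u‖ ≤ (p + 2) * 3 ^ p * ‖u‖ ^ p := by
  set x := 3 * ‖u‖
  have hx : 1 ≤ x := by linarith
  have h1u : ‖1 + u‖ ≤ x := (norm_add_le _ _).trans (by simp only [norm_one, x]; linarith)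
  have hA : ‖1 + u‖ ^ (p - 1) * ‖1 + u‖ ≤ x ^ p := by
    rw [← div_mul_cancel₀ (x ^ p) (by positivity : x ≠ 0), ← Real.rpow_sub_one (by positivity)]
    exact mul_le_mul (Real.rpow_le_rpow (norm_nonneg _) h1u (by linarith)) h1u
      (norm_nonneg _) (by positivity)
  have hB : 1 ≤ x ^ p := Real.one_le_rpow hx (by linarith)
  have hC : ‖u‖ ≤ x ^ p := by
    linarith [Real.self_le_rpow_of_one_le hx hp, norm_nonneg u]
  have htri : ‖powRemainder p 1 u‖ ≤ ‖1 + u‖ ^ (p - 1) * ‖1 + u‖ + 1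
      + (p + 1) / 2 * ‖u‖ + (p - 1) / 2 * ‖u‖ := by
    simp only [powRemainder, Complex.ofReal_one, Real.one_rpow, mul_one]
    refine (norm_sub_le _ _).trans (add_le_add ((norm_sub_le _ _).trans
      (add_le_add ((norm_sub_le _ _).trans (add_le_add ?_ ?_)) ?_)) ?_) <;>
    simp only [norm_mul, Complex.norm_real, norm_one, Complex.norm_conj, le_refl,
      Real.norm_of_nonneg (Real.rpow_nonneg (norm_nonneg _) _),
      Real.norm_of_nonneg (by linarith : (0 : ℝ) ≤ (p + 1) / 2),
      Real.norm_of_nonneg (by linarith : (0 : ℝ) ≤ (p - 1) / 2)]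
  calc ‖powRemainder p 1 u‖ ≤ x ^ p + x ^ p + (p + 1) / 2 * x ^ p + (p - 1) / 2 * x ^ p := by
        have : 0 ≤ p - 1 := by linarith
        nlinarith
    _ = (p + 2) * 3 ^ p * ‖u‖ ^ p := by
        rw [Real.mul_rpow (by norm_num) (norm_nonneg _)]
        ring

theorem norm_powRemainder_one_le_of_norm_le_half {p : ℝ} (hp : 5 ≤ p) {u : ℂ}
    (hu : ‖u‖ ≤ 1 / 2) : ‖powRemainder p 1 u‖ ≤ p ^ 2 * 3 ^ p * ‖u‖ ^ 2 := by
  rw [powRemainder_one_eq]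
  set α := (p - 1) / 2 with hα_def
  set s := ‖1 + u‖ ^ 2 - 1
  have hα : 2 ≤ α := by linarith
  have hαα : 0 ≤ α * (α - 1) := by nlinarith
  have h1u : ‖1 + u‖ ≤ 3 / 2 := (norm_add_le _ _).trans (by rw [norm_one]; linarith)
  have hs : |s| ≤ 3 * ‖u‖ := by
    have hre := abs_le.1 (Complex.abs_re_le_norm u)
    rw [abs_le]
    constructor <;> nlinarith [Complex.sq_norm_one_add u, norm_nonneg u]
  have hE := abs_one_add_rpow_sub_le hα (by nlinarith [norm_nonneg (1 + u)])
    (by nlinarith [norm_nonneg (1 + u)] : s ≤ 2)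
  rw [add_sub_cancel] at hE
  have hs2 : s ^ 2 ≤ (3 * ‖u‖) ^ 2 := by
    rw [← sq_abs]
    exact pow_le_pow_left₀ (abs_nonneg s) hs 2
  have h3α : (3 : ℝ) ^ (α - 2) * 3 ^ 2 = 3 ^ α := by
    rw [← Real.rpow_natCast, ← Real.rpow_add (by norm_num)]
    norm_num
  have h3αp : (3 : ℝ) ^ α ≤ 3 ^ p := Real.rpow_le_rpow_of_exponent_le (by norm_num) (by linarith)
  have hcoeff : 0 ≤ α * (α - 1) * 3 ^ (α - 2) := mul_nonneg hαα (by positivity)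
  calc _ ≤ α * ‖u‖ ^ 2 + α * |s| * ‖u‖ + |(‖1 + u‖ ^ 2) ^ α - 1 - α * s| * ‖1 + u‖ := by
        refine (norm_add₃_le).trans (le_of_eq ?_)
        simp only [norm_mul, Complex.norm_real, Real.norm_eq_abs,
          abs_of_nonneg (by linarith : 0 ≤ α), abs_of_nonneg (sq_nonneg ‖u‖)]
    _ ≤ α * ‖u‖ ^ 2 + α * (3 * ‖u‖) * ‖u‖
          + α * (α - 1) * 3 ^ (α - 2) * (3 * ‖u‖) ^ 2 * (3 / 2) := by
        gcongr
        exact hE.trans (mul_le_mul_of_nonneg_left hs2 hcoeff)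
    _ = α * (4 + 3 / 2 * (α - 1) * 3 ^ α) * ‖u‖ ^ 2 := by
        rw [← h3α]
        ring
    _ ≤ p ^ 2 * 3 ^ p * ‖u‖ ^ 2 := by
        refine mul_le_mul_of_nonneg_right ?_ (sq_nonneg _)
        have h3p : 1 ≤ (3 : ℝ) ^ p := Real.one_le_rpow (by norm_num) (by linarith)
        have hαp : α * (α - 1) ≤ p ^ 2 / 4 := by nlinarith
        nlinarith [mul_le_mul_of_nonneg_left h3αp hαα, mul_le_mul_of_nonneg_right hαp
          (by linarith : (0 : ℝ) ≤ 3 ^ p), mul_le_mul_of_nonneg_left h3p (sq_nonneg p)]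

theorem norm_powRemainder_one_le {p : ℝ} (hp : 5 ≤ p) (u : ℂ) :
    ‖powRemainder p 1 u‖ ≤ (p ^ 2 + p + 2) * 3 ^ p * (‖u‖ ^ 2 + ‖u‖ ^ p) := by
  have h3p : 0 < (3 : ℝ) ^ p := by positivity
  have hsq : 0 ≤ ‖u‖ ^ 2 := by positivity
  have hpow : 0 ≤ ‖u‖ ^ p := by positivity
  rcases le_total ‖u‖ (1 / 2) with hu | hu
  · have := norm_powRemainder_one_le_of_norm_le_half hp hu
    nlinarith [mul_nonneg (mul_nonneg (by linarith : 0 ≤ p + 2) h3p.le) hsq,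
      mul_nonneg (mul_nonneg (by nlinarith : 0 ≤ p ^ 2 + p + 2) h3p.le) hpow]
  · have := norm_powRemainder_one_le_of_half_le_norm (by linarith : 1 ≤ p) hu
    nlinarith [mul_nonneg (mul_nonneg (sq_nonneg p) h3p.le) hpow,
      mul_nonneg (mul_nonneg (by nlinarith : 0 ≤ p ^ 2 + p + 2) h3p.le) hsq]

/-- Taylor remainder bound for the monic power nonlinearity: the remainder of the
linearization of `z ↦ |z|^{p-1} z` at a positive real point `φ` is controlled by
`C(φ^{p-2}|w|² + |w|^p)`. -/
theorem nonlinearity_remainder_bound (p : ℝ) (hp : 5 < p) :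
    ∃ C : ℝ, 0 < C ∧ ∀ φ : ℝ, 0 < φ → ∀ w : ℂ,
      ‖((‖(φ : ℂ) + w‖ ^ (p - 1) : ℝ) : ℂ) * ((φ : ℂ) + w)
          - ((φ ^ p : ℝ) : ℂ)
          - (((p + 1) / 2 : ℝ) : ℂ) * ((φ ^ (p - 1) : ℝ) : ℂ) * w
          - (((p - 1) / 2 : ℝ) : ℂ) * ((φ ^ (p - 1) : ℝ) : ℂ) * starRingEnd ℂ w‖
        ≤ C * (φ ^ (p - 2) * ‖w‖ ^ 2 + ‖w‖ ^ p) := by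
  refine ⟨(p ^ 2 + p + 2) * 3 ^ p, mul_pos (by nlinarith) (by positivity), fun φ hφ w => ?_⟩
  have hscale : φ ^ p * (‖w / φ‖ ^ 2 + ‖w / φ‖ ^ p) = φ ^ (p - 2) * ‖w‖ ^ 2 + ‖w‖ ^ p := by
    rw [norm_div, Complex.norm_real, Real.norm_of_nonneg hφ.le,
      Real.div_rpow (norm_nonneg _) hφ.le, Real.rpow_sub hφ, Real.rpow_two]
    field_simp
  show ‖powRemainder p φ w‖ ≤ _
  rw [powRemainder_eq_rpow_mul hφ, norm_mul, Complex.norm_real,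
    Real.norm_of_nonneg (by positivity), ← hscale, mul_left_comm]
  exact mul_le_mul_of_nonneg_left (norm_powRemainder_one_le hp.le _) (by positivity)
end
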